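/- Let (Λ,η) be a full isothermic surface in S³ whose lift F : Σ → E(w) has constant mean curvature H with respect to a unit normal N in the space-form E(w) of sectional curvature K = −(w,w), with η = F ∧ d(HF+N), so that p(t) = w + (HF+N)t is a polynomial conserved quantity of (Λ,η). Let (Λ_s,η_s) be a T-transform of (Λ,η) via Φ_s. Then Λ_s is a constant mean curvature surface in the space-form E(Φ_s(p(s))) of sectional curvature K_s = −(Φ_s(p(s)),Φ_s(p(s))) with constant mean curvature H_s = −(Φ_s(HF+N),Φ_s(p(s))) with respect to the unit normal Φ_s(N+sF), and the Lawson identity H_s² + K_s = H² + K holds. -/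

import Mathlib

noncomputable section

open Finset

/-- Minkowski space `ℝ^{n+1,1}`, modelled on `Fin (n+2) → ℝ`. -/
abbrev MV (n : ℕ) : Type := EuclideanSpace ℝ (Fin (n + 2))

/-- The Minkowski inner product of signature `(n+1,1)`. -/
def mink (n : ℕ) (x y : MV n) : ℝ :=
  ∑ i : Fin (n + 1), x i.castSucc * y i.castSucc
    - x (Fin.last (n + 1)) * y (Fin.last (n + 1))

/-- The light cone `L ⊂ ℝ^{n+1,1}`. -/
def LightCone (n : ℕ) : Set (MV n) := {v | v ≠ 0 ∧ mink n v v = 0}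

/-- The skew endomorphism `u ∧ v`, acting by `(u ∧ v) w = (u,w)v − (v,w)u`. -/
def wedge (n : ℕ) (u v w : MV n) : MV n :=
  mink n u w • v - mink n v w • u

/-- The surface domain: a two-dimensional coordinate chart. -/
abbrev Surf : Type := ℝ × ℝ

/-- the coordinate direction ∂/∂u -/
def du : Surf := (1, 0)

/-- the coordinate direction ∂/∂v -/
def dv : Surf := (0, 1)

/-- partial derivative of a section in a coordinate direction -/
def pd {n : ℕ} (e : Surf) (f : Surf → MV n) (x : Surf) : MV n :=
  fderiv ℝ f x e

lemma mink_add_left (n : ℕ) (a b c : MV n) :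
    mink n (a + b) c = mink n a c + mink n b c := by
  simp [mink, PiLp.add_apply, add_mul, Finset.sum_add_distrib]; ring

lemma mink_smul_left (n : ℕ) (r : ℝ) (a c : MV n) :
    mink n (r • a) c = r * mink n a c := by
  simp [mink, PiLp.smul_apply, smul_eq_mul, mul_sub, Finset.mul_sum, mul_assoc]

lemma mink_zero_left (n : ℕ) (c : MV n) : mink n 0 c = 0 := by
  simp [mink]

/-- An isothermic surface `(Λ,η)` in `S^n = P(L)`, given by a nowhere-zero null
lift `F` of the immersion `Λ` together with the 1-form
`η = F ∧ W₁ du + F ∧ W₂ dv` with values in `Λ ∧ Λ^⊥`. -/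
structure IsothermicSurface (n : ℕ) : Type where
  F : Surf → MV n
  W₁ : Surf → MV n
  W₂ : Surf → MV n
  smooth_F : ContDiff ℝ (⊤ : ℕ∞) F
  smooth_W₁ : ContDiff ℝ (⊤ : ℕ∞) W₁
  smooth_W₂ : ContDiff ℝ (⊤ : ℕ∞) W₂
  F_ne : ∀ x, F x ≠ 0
  F_null : ∀ x, mink n (F x) (F x) = 0
  immersed : ∀ x, LinearIndependent ℝ ![F x, pd du F x, pd dv F x]
  W₁_perp : ∀ x, mink n (F x) (W₁ x) = 0
  W₂_perp : ∀ x, mink n (F x) (W₂ x) = 0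
  eta_ne : ∃ x z, wedge n (F x) (W₁ x) z ≠ 0 ∨ wedge n (F x) (W₂ x) z ≠ 0
  eta_closed : ∀ x z,
    fderiv ℝ (fun y => wedge n (F y) (W₂ y) z) x du
      = fderiv ℝ (fun y => wedge n (F y) (W₁ y) z) x dv

/-- `s` is a parallel section for the flat connection `∇^t = d + tη`. -/
def ParallelSection (n : ℕ) (S : IsothermicSurface n) (t : ℝ)
    (s : Surf → MV n) : Prop :=
  ∀ x, fderiv ℝ s x du + t • wedge n (S.F x) (S.W₁ x) (s x) = 0
     ∧ fderiv ℝ s x dv + t • wedge n (S.F x) (S.W₂ x) (s x) = 0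

/-- A polynomial conserved quantity of degree `d` of the isothermic surface
`(Λ,η)`: a polynomial `p(t) = Σ_{k=0}^d p_k t^k` of (smooth) sections, of exact
degree `d`, with `∇^t p(t) = 0` for all `t`. -/
structure PolyConservedQuantity (n : ℕ) (S : IsothermicSurface n) (d : ℕ) : Type where
  coeff : ℕ → Surf → MV n
  smooth : ∀ k, ContDiff ℝ (⊤ : ℕ∞) (coeff k)
  coeff_eq_zero : ∀ k, d < k → coeff k = 0
  top_ne : coeff d ≠ 0
  conserved : ∀ t : ℝ, ParallelSection n S t
    (fun x => ∑ k ∈ Finset.range (d + 1), t ^ k • coeff k x)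

/-- evaluation `p(t)` of a polynomial conserved quantity -/
def pcEval {n : ℕ} {S : IsothermicSurface n} {d : ℕ}
    (p : PolyConservedQuantity n S d) (t : ℝ) (x : Surf) : MV n :=
  ∑ k ∈ Finset.range (d + 1), t ^ k • p.coeff k x

/-- `(Λ,η)` is a special isothermic surface of type `d`. -/
def SpecialOfType (n : ℕ) (S : IsothermicSurface n) (d : ℕ) : Prop :=
  Nonempty (PolyConservedQuantity n S d)

/-- `p₀ ∈ ⟨w⟩`: the polynomial conserved quantity exhibits `(Λ,η)` as special
isothermic in the space-form `E(w)`. -/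
def InSpaceForm {n : ℕ} {S : IsothermicSurface n} {d : ℕ}
    (p : PolyConservedQuantity n S d) (w : MV n) : Prop :=
  ∃ c : ℝ, ∀ x, p.coeff 0 x = c • w

/-- fullness: the image of `Λ` lies in no proper subsphere -/
def Full (n : ℕ) (S : IsothermicSurface n) : Prop :=
  ¬ ∃ p : MV n, p ≠ 0 ∧ ∀ x, mink n p (S.F x) = 0
/-- A Darboux transform `Λ̂` of `(Λ,η)` with parameter `m`, given by a
`∇^m`-parallel null lift `G` spanning an immersed surface with `Λ̂ ∩ Λ = 0`. -/
structure DarbouxTransform (n : ℕ) (S : IsothermicSurface n) (m : ℝ) : Type where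
  G : Surf → MV n
  smooth_G : ContDiff ℝ (⊤ : ℕ∞) G
  G_ne : ∀ x, G x ≠ 0
  G_null : ∀ x, mink n (G x) (G x) = 0
  immersed : ∀ x, LinearIndependent ℝ ![G x, pd du G x, pd dv G x]
  disjoint : ∀ x, G x ∉ Submodule.span ℝ {S.F x}
  parallel : ParallelSection n S m G

/-- The gauge transformation `Γ_{⟨F⟩}^{⟨G⟩}(c)`: acts as `c` on `⟨G⟩`, as `1` on
`(⟨F⟩ ⊕ ⟨G⟩)^⊥` and as `c⁻¹` on `⟨F⟩`. -/
def gaugeG (n : ℕ) (F G : MV n) (c : ℝ) (z : MV n) : MV n :=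
  ((mink n G z / mink n F G) / c) • F
    + (c * (mink n F z / mink n F G)) • G
    + (z - (mink n G z / mink n F G) • F - (mink n F z / mink n F G) • G)

/-- `Γ_Λ^{Λ̂}(1 − t/m) · (d + tη) = d + tη̂` for all `t ≠ m`: the gauge relation
between the pencils of flat connections of an isothermic surface `S` and of (an
isothermic structure `T` on) its Darboux transform with parameter `m`. -/
def GaugeRel (n : ℕ) (S T : IsothermicSurface n) (m : ℝ) : Prop :=
  ∀ t : ℝ, t ≠ m → ∀ s : Surf → MV n, ContDiff ℝ (⊤ : ℕ∞) s → ∀ x : Surf,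
    (fderiv ℝ (fun y => gaugeG n (S.F y) (T.F y) (1 - t / m) (s y)) x du
        + t • wedge n (T.F x) (T.W₁ x) (gaugeG n (S.F x) (T.F x) (1 - t / m) (s x))
      = gaugeG n (S.F x) (T.F x) (1 - t / m)
          (fderiv ℝ s x du + t • wedge n (S.F x) (S.W₁ x) (s x)))
    ∧ (fderiv ℝ (fun y => gaugeG n (S.F y) (T.F y) (1 - t / m) (s y)) x dv
        + t • wedge n (T.F x) (T.W₂ x) (gaugeG n (S.F x) (T.F x) (1 - t / m) (s x))
      = gaugeG n (S.F x) (T.F x) (1 - t / m)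
          (fderiv ℝ s x dv + t • wedge n (S.F x) (S.W₂ x) (s x)))

/-- `Λ̂ = ⟨p(m)⟩` with `(p(m),p(m)) = 0`: the Darboux transform `D` is a
complementary surface of `(Λ,η)` with respect to `p(t)`. -/
def IsComplementary (n : ℕ) {S : IsothermicSurface n} {d : ℕ}
    (p : PolyConservedQuantity n S d) {m : ℝ} (D : DarbouxTransform n S m) : Prop :=
  (∀ x, mink n (pcEval p m x) (pcEval p m x) = 0) ∧
  (∀ x, Submodule.span ℝ {D.G x} = Submodule.span ℝ {pcEval p m x})

/-- `m` is a repeated root of the (constant-coefficient) polynomial `(p(t),p(t))`. -/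
def IsRepeatedRootAt {n : ℕ} {S : IsothermicSurface n} {d : ℕ}
    (p : PolyConservedQuantity n S d) (m : ℝ) : Prop :=
  ∀ x, mink n (pcEval p m x) (pcEval p m x) = 0
    ∧ deriv (fun t : ℝ => mink n (pcEval p t x) (pcEval p t x)) m = 0
/-- metric coefficient `g₁₁ = (F_u,F_u)` of the induced metric -/
def gUU (n : ℕ) (F : Surf → MV n) (x : Surf) : ℝ := mink n (pd du F x) (pd du F x)

/-- metric coefficient `g₁₂ = (F_u,F_v)` -/
def gUV (n : ℕ) (F : Surf → MV n) (x : Surf) : ℝ := mink n (pd du F x) (pd dv F x)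

/-- metric coefficient `g₂₂ = (F_v,F_v)` -/
def gVV (n : ℕ) (F : Surf → MV n) (x : Surf) : ℝ := mink n (pd dv F x) (pd dv F x)

/-- `(𝐇, N)`, the inner product of the mean curvature vector of `F` (in a
space-form `E(w)`) with a normal field `N`: half the trace with respect to the
induced metric of the `N`-component of the second fundamental form. -/
def meanCurv (n : ℕ) (F N : Surf → MV n) (x : Surf) : ℝ :=
  (gVV n F x * mink n (pd du (pd du F) x) (N x)
    - 2 * gUV n F x * mink n (pd du (pd dv F) x) (N x)
    + gUU n F x * mink n (pd dv (pd dv F) x) (N x))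
  / (2 * (gUU n F x * gVV n F x - gUV n F x ^ 2))

/-- `N` is a unit normal field of the lift `F : Σ → E(w)`. -/
def IsUnitNormal (n : ℕ) (F N : Surf → MV n) (w : MV n) : Prop :=
  (∀ x, mink n (N x) (N x) = 1) ∧ (∀ x, mink n (N x) w = 0)
    ∧ (∀ x, mink n (N x) (F x) = 0)
    ∧ (∀ x, mink n (N x) (pd du F x) = 0) ∧ (∀ x, mink n (N x) (pd dv F x) = 0)

/-- `N` is parallel for the normal connection of `F : Σ → E(w)`: the derivative
of `N` has no component in the normal bundle of `F` in `E(w)`. -/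
def ParallelNormal (n : ℕ) (F N : Surf → MV n) (w : MV n) : Prop :=
  ∀ x e, fderiv ℝ N x e ∈ Submodule.span ℝ {F x, pd du F x, pd dv F x, w}

/-- the chart coordinates `(u,v)` are conformal curvature line coordinates
corresponding to `η`, with conformal factor `e^{2θ}`:
`I = e^{2θ}(du² + dv²)` and `η = e^{−2θ} F ∧ (−F_u du + F_v dv)`. -/
def ConformalCoords (n : ℕ) (S : IsothermicSurface n) (θ : Surf → ℝ) : Prop :=
  ContDiff ℝ (⊤ : ℕ∞) θ
  ∧ (∀ x, mink n (pd du S.F x) (pd du S.F x) = Real.exp (2 * θ x))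
  ∧ (∀ x, mink n (pd dv S.F x) (pd dv S.F x) = Real.exp (2 * θ x))
  ∧ (∀ x, mink n (pd du S.F x) (pd dv S.F x) = 0)
  ∧ (∀ x z, wedge n (S.F x) (S.W₁ x) z
      = Real.exp (-(2 * θ x)) • wedge n (S.F x) (-pd du S.F x) z)
  ∧ (∀ x z, wedge n (S.F x) (S.W₂ x) z
      = Real.exp (-(2 * θ x)) • wedge n (S.F x) (pd dv S.F x) z)

/-- the second fundamental form of the lift `F` in `E(w)` with respect to the
unit normal `N` is `II = e^{2θ}(k₁ du² + k₂ dv²)`. -/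
def PrincipalCurvatures (n : ℕ) (S : IsothermicSurface n) (N : Surf → MV n)
    (θ k₁ k₂ : Surf → ℝ) : Prop :=
  (∀ x, mink n (pd du (pd du S.F) x) (N x) = Real.exp (2 * θ x) * k₁ x)
  ∧ (∀ x, mink n (pd du (pd dv S.F) x) (N x) = 0)
  ∧ (∀ x, mink n (pd dv (pd dv S.F) x) (N x) = Real.exp (2 * θ x) * k₂ x)

/-- partial derivative of a real function on the surface -/
def pdR (e : Surf) (f : Surf → ℝ) (x : Surf) : ℝ := fderiv ℝ f x e
/-- `(Λ^c, η^c)` is the Christoffel transform of `(Λ,η)` with respect to the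
pair `(v∞, v₀)`, witnessed by the stereoprojections `f`, `f^c` into
`ℝ^n = ⟨v₀,v∞⟩^⊥`:  `F = exp(f ∧ v∞)v₀`, `F^c = exp(f^c ∧ v₀)v∞`,
`η = Ad(exp(f ∧ v∞))(df^c ∧ v₀)` and `η^c = Ad(exp(f^c ∧ v₀))(df ∧ v∞)`. -/
def IsChristoffelPair (n : ℕ) (S Sc : IsothermicSurface n) (vinf v0 : MV n)
    (f fc : Surf → MV n) : Prop :=
  vinf ∈ LightCone n ∧ v0 ∈ LightCone n ∧ mink n v0 vinf = -1
  ∧ ContDiff ℝ (⊤ : ℕ∞) f ∧ ContDiff ℝ (⊤ : ℕ∞) fc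
  ∧ (∀ x, mink n (f x) v0 = 0) ∧ (∀ x, mink n (f x) vinf = 0)
  ∧ (∀ x, mink n (fc x) v0 = 0) ∧ (∀ x, mink n (fc x) vinf = 0)
  ∧ (∀ x, S.F x = v0 + f x + (mink n (f x) (f x) / 2) • vinf)
  ∧ (∀ x, Sc.F x = vinf + fc x + (mink n (fc x) (fc x) / 2) • v0)
  ∧ (∀ x z, wedge n (S.F x) (S.W₁ x) z
      = wedge n (pd du fc x + mink n (f x) (pd du fc x) • vinf) (S.F x) z)
  ∧ (∀ x z, wedge n (S.F x) (S.W₂ x) z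
      = wedge n (pd dv fc x + mink n (f x) (pd dv fc x) • vinf) (S.F x) z)
  ∧ (∀ x z, wedge n (Sc.F x) (Sc.W₁ x) z
      = wedge n (pd du f x + mink n (fc x) (pd du f x) • v0) (Sc.F x) z)
  ∧ (∀ x z, wedge n (Sc.F x) (Sc.W₂ x) z
      = wedge n (pd dv f x + mink n (fc x) (pd dv f x) • v0) (Sc.F x) z)

/-- `Φ` is an orthogonal gauge transformation with `Φ · (d + sη) = d`. -/
def IsTGauge (n : ℕ) (S : IsothermicSurface n) (s : ℝ)
    (Φ : Surf → MV n → MV n) : Prop :=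
  (∀ x, IsLinearMap ℝ (Φ x))
  ∧ (∀ x z z', mink n (Φ x z) (Φ x z') = mink n z z')
  ∧ (∀ σ : Surf → MV n, ContDiff ℝ (⊤ : ℕ∞) σ → ∀ x,
      (fderiv ℝ (fun y => Φ y (σ y)) x du
         = Φ x (fderiv ℝ σ x du + s • wedge n (S.F x) (S.W₁ x) (σ x)))
      ∧ (fderiv ℝ (fun y => Φ y (σ y)) x dv
         = Φ x (fderiv ℝ σ x dv + s • wedge n (S.F x) (S.W₂ x) (σ x))))

/-- `(Λ_s, η_s)` is the T-transform of `(Λ,η)` associated to `Φ_s`: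
`Λ_s = Φ_s Λ` and `η_s = Ad(Φ_s) η`. -/
def IsTTransform (n : ℕ) (S : IsothermicSurface n) (s : ℝ)
    (Φ : Surf → MV n → MV n) (Ss : IsothermicSurface n) : Prop :=
  IsTGauge n S s Φ
  ∧ (∀ x, Ss.F x = Φ x (S.F x))
  ∧ (∀ x z, wedge n (Ss.F x) (Ss.W₁ x) (Φ x z) = Φ x (wedge n (S.F x) (S.W₁ x) z))
  ∧ (∀ x z, wedge n (Ss.F x) (Ss.W₂ x) (Φ x z) = Φ x (wedge n (S.F x) (S.W₂ x) z))

/-- orthogonal complement with respect to the Minkowski form -/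
def mperp (n : ℕ) (U : Submodule ℝ (MV n)) : Submodule ℝ (MV n) where
  carrier := {v | ∀ u ∈ U, mink n v u = 0}
  add_mem' := by
    intro a b ha hb u hu
    rw [mink_add_left, ha u hu, hb u hu, add_zero]
  zero_mem' := by
    intro u hu; exact mink_zero_left n u
  smul_mem' := by
    intro r a ha u hu
    rw [mink_smul_left, ha u hu, mul_zero]

/-- the spherical system of `Λ` and a Darboux transform `Λ̂ = ⟨G⟩`: the
`(n−2)`-sphere congruence `C = Λ ⊕ Λ̂ ⊕ V_R^⊥`, `V_R = Λ^{(1)} ⊕ Λ̂`. -/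
def sphericalSystem (n : ℕ) (S : IsothermicSurface n) (G : Surf → MV n)
    (x : Surf) : Submodule ℝ (MV n) :=
  Submodule.span ℝ {S.F x, G x}
    ⊔ mperp n (Submodule.span ℝ {S.F x, pd du S.F x, pd dv S.F x, G x})

/-- the sphere-planes congruence `P = C + ⟨w⟩` of `Λ` and `Λ̂ = ⟨G⟩` with
respect to `w`. -/
def spherePlanes (n : ℕ) (S : IsothermicSurface n) (G : Surf → MV n)
    (w : MV n) (x : Surf) : Submodule ℝ (MV n) :=
  sphericalSystem n S G x ⊔ Submodule.span ℝ {w}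

section LawsonHelpers

lemma mink_comm (n : ℕ) (x y : MV n) : mink n x y = mink n y x := by
  simp [mink, mul_comm]

lemma mink_add_right (n : ℕ) (a b c : MV n) :
    mink n a (b + c) = mink n a b + mink n a c := by
  rw [mink_comm, mink_add_left, mink_comm n b a, mink_comm n c a]

lemma mink_smul_right (n : ℕ) (r : ℝ) (a c : MV n) :
    mink n a (r • c) = r * mink n a c := by
  rw [mink_comm, mink_smul_left, mink_comm]

lemma mink_neg_left (n : ℕ) (a c : MV n) : mink n (-a) c = -mink n a c := by
  simpa using mink_smul_left n (-1) a c

lemma mink_sub_left (n : ℕ) (a b c : MV n) :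
    mink n (a - b) c = mink n a c - mink n b c := by
  rw [sub_eq_add_neg, mink_add_left, mink_neg_left, sub_eq_add_neg]

lemma mink_sub_right (n : ℕ) (a b c : MV n) :
    mink n a (b - c) = mink n a b - mink n a c := by
  rw [mink_comm, mink_sub_left, mink_comm n b a, mink_comm n c a]

lemma mink_zero_right (n : ℕ) (c : MV n) : mink n c 0 = 0 := by
  rw [mink_comm]; exact mink_zero_left n c

lemma wedge_add_right (n : ℕ) (u v a b : MV n) :
    wedge n u v (a + b) = wedge n u v a + wedge n u v b := by
  simp only [wedge, mink_add_right, add_smul]; abel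

lemma wedge_apply_perp (n : ℕ) (u v z : MV n) (h : mink n u z = 0) :
    wedge n u v z = -(mink n v z) • u := by
  simp [wedge, h]

lemma clm_eq_zero_of_du_dv (L : Surf →L[ℝ] MV 3) (h1 : L du = 0) (h2 : L dv = 0) :
    L = 0 := by
  apply ContinuousLinearMap.ext
  intro v
  have hv : v = v.1 • du + v.2 • dv := by
    simp [du, dv, Prod.ext_iff]
  rw [hv]
  simp [h1, h2]

lemma last_ne_zero_of_null {n : ℕ} (P : MV n) (hPne : P ≠ 0) (hP : mink n P P = 0) :
    P (Fin.last (n+1)) ≠ 0 := by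
  intro h4
  apply hPne
  have hs : ∑ i : Fin (n+1), P i.castSucc * P i.castSucc = 0 := by
    simp only [mink, h4] at hP; linarith
  have hz : ∀ i : Fin (n+1), P i.castSucc = 0 := by
    intro i
    have := (Finset.sum_eq_zero_iff_of_nonneg (fun i _ => mul_self_nonneg (P i.castSucc))).mp hs i (mem_univ i)
    exact mul_self_eq_zero.mp this
  ext j
  show P j = 0
  exact Fin.lastCases h4 hz j

lemma mink_perp_nonneg {n : ℕ} (P z : MV n)
    (hP : mink n P P = 0) (hP4 : P (Fin.last (n+1)) ≠ 0)
    (hzP : mink n z P = 0) :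
    0 ≤ mink n z z ∧ (mink n z z = 0 →
      z = (z (Fin.last (n+1)) / P (Fin.last (n+1))) • P) := by
  set l := Fin.last (n+1) with hl
  have e1 : ∑ i : Fin (n+1), P i.castSucc * P i.castSucc = P l * P l := by
    simp only [mink, ← hl] at hP; linarith
  have e2 : ∑ i : Fin (n+1), z i.castSucc * P i.castSucc = z l * P l := by
    simp only [mink, ← hl] at hzP; linarith
  have hsum : ∑ i : Fin (n+1), (P l * z i.castSucc - z l * P i.castSucc)^2
      = P l ^ 2 * mink n z z := by
    have expand : ∀ i : Fin (n+1), (P l * z i.castSucc - z l * P i.castSucc)^2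
        = P l ^ 2 * (z i.castSucc * z i.castSucc)
          - (2 * (P l * z l)) * (z i.castSucc * P i.castSucc)
          + z l ^ 2 * (P i.castSucc * P i.castSucc) := fun i => by ring
    rw [Finset.sum_congr rfl fun i _ => expand i]
    rw [Finset.sum_add_distrib, Finset.sum_sub_distrib, ← Finset.mul_sum, ← Finset.mul_sum,
      ← Finset.mul_sum, e1, e2]
    simp only [mink, ← hl]
    ring
  have hnn : 0 ≤ P l ^ 2 * mink n z z := by
    rw [← hsum]; exact Finset.sum_nonneg fun i _ => sq_nonneg _
  have hp2 : 0 < P l ^ 2 := by positivity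
  constructor
  · by_contra hneg
    push_neg at hneg
    nlinarith
  · intro hz0
    have h0 : ∑ i : Fin (n+1), (P l * z i.castSucc - z l * P i.castSucc)^2 = 0 := by
      rw [hsum, hz0, mul_zero]
    have hall : ∀ i : Fin (n+1), P l * z i.castSucc - z l * P i.castSucc = 0 := by
      intro i
      have := (Finset.sum_eq_zero_iff_of_nonneg (fun i _ => sq_nonneg _)).mp h0 i (mem_univ i)
      exact pow_eq_zero_iff (two_ne_zero) |>.mp this
    ext j
    show z j = ((z l / P l) • P) j
    have happ : ((z l / P l) • P) j = (z l / P l) * P j := rfl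
    rw [happ]
    refine Fin.lastCases ?_ ?_ j
    · rw [← hl]; field_simp
    · intro i
      rw [div_mul_eq_mul_div, eq_div_iff hP4]
      have := hall i
      linarith

lemma fderiv_mink {n : ℕ} {f g : Surf → MV n} {x : Surf}
    (hf : DifferentiableAt ℝ f x) (hg : DifferentiableAt ℝ g x) (e : Surf) :
    fderiv ℝ (fun y => mink n (f y) (g y)) x e
      = mink n (fderiv ℝ f x e) (g x) + mink n (f x) (fderiv ℝ g x e) := by
  have hcoord : ∀ (h : Surf → MV n), DifferentiableAt ℝ h x → ∀ i : Fin (n+2),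
      HasFDerivAt (fun y => h y i)
        ((EuclideanSpace.proj i).comp (fderiv ℝ h x)) x := by
    intro h hh i
    have := (EuclideanSpace.proj (𝕜 := ℝ) i).hasFDerivAt.comp x hh.hasFDerivAt
    exact this
  have Hterm : ∀ i : Fin (n+2),
      HasFDerivAt (fun y => f y i * g y i)
        (f x i • ((EuclideanSpace.proj i).comp (fderiv ℝ g x))
          + g x i • ((EuclideanSpace.proj i).comp (fderiv ℝ f x))) x :=
    fun i => (hcoord f hf i).mul (hcoord g hg i)
  have Hsum : HasFDerivAt (fun y => ∑ i : Fin (n+1), f y i.castSucc * g y i.castSucc)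
      (∑ i : Fin (n+1), (f x i.castSucc • ((EuclideanSpace.proj i.castSucc).comp (fderiv ℝ g x))
          + g x i.castSucc • ((EuclideanSpace.proj i.castSucc).comp (fderiv ℝ f x)))) x :=
    HasFDerivAt.fun_sum (fun i _ => Hterm i.castSucc)
  have Hmink : HasFDerivAt (fun y => mink n (f y) (g y))
      ((∑ i : Fin (n+1), (f x i.castSucc • ((EuclideanSpace.proj i.castSucc).comp (fderiv ℝ g x))
          + g x i.castSucc • ((EuclideanSpace.proj i.castSucc).comp (fderiv ℝ f x))))
        - (f x (Fin.last (n+1)) • ((EuclideanSpace.proj (Fin.last (n+1))).comp (fderiv ℝ g x))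
          + g x (Fin.last (n+1)) • ((EuclideanSpace.proj (Fin.last (n+1))).comp (fderiv ℝ f x)))) x :=
    Hsum.sub (Hterm (Fin.last (n+1)))
  rw [Hmink.fderiv]
  simp only [ContinuousLinearMap.coe_sub', Pi.sub_apply, ContinuousLinearMap.coe_sum',
    Finset.sum_apply, ContinuousLinearMap.add_apply, ContinuousLinearMap.coe_smul',
    Pi.smul_apply, ContinuousLinearMap.coe_comp', Function.comp_apply,
    smul_eq_mul, mink, Finset.sum_add_distrib]
  have hp : ∀ (i : Fin (n+2)) (v : MV n), (EuclideanSpace.proj (𝕜 := ℝ) i) v = v i := fun i v => rfl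
  simp only [hp]
  have hcomm : (∑ i : Fin (n+1), g x i.castSucc * (fderiv ℝ f x) e i.castSucc)
      = ∑ i : Fin (n+1), (fderiv ℝ f x) e i.castSucc * g x i.castSucc :=
    Finset.sum_congr rfl fun i _ => mul_comm _ _
  rw [hcomm]
  ring

lemma mink3_expand (x y : MV 3) :
    mink 3 x y = x 0 * y 0 + x 1 * y 1 + x 2 * y 2 + x 3 * y 3 - x 4 * y 4 := by
  show (∑ i : Fin 4, x i.castSucc * y i.castSucc) - x (Fin.last 4) * y (Fin.last 4) = _
  rw [Fin.sum_univ_four]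
  rfl

lemma exists_perp_nonnull (P : MV 3) :
    ∃ z : MV 3, mink 3 z P = 0 ∧ mink 3 z z ≠ 0 := by
  by_cases h0 : P 0 = 0
  · refine ⟨EuclideanSpace.single 0 1, ?_, ?_⟩ <;>
      simp [mink3_expand, EuclideanSpace.single_apply, h0]
  · refine ⟨EuclideanSpace.single 0 (-(P 1)) + EuclideanSpace.single 1 (P 0), ?_, ?_⟩ <;>
      simp [mink3_expand, EuclideanSpace.single_apply, PiLp.add_apply]
    · ring
    · intro h
      have := mul_self_pos.mpr h0
      nlinarith [mul_self_nonneg (P 1)]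

lemma gram_det_pos (P u v : MV 3) (hPne : P ≠ 0) (hPnull : mink 3 P P = 0)
    (huP : mink 3 u P = 0) (hvP : mink 3 v P = 0)
    (hind : LinearIndependent ℝ ![P, u, v]) :
    0 < mink 3 u u * mink 3 v v - mink 3 u v ^ 2 := by
  have hP4 := last_ne_zero_of_null P hPne hPnull
  have hli := Fintype.linearIndependent_iff.mp hind
  have key : ∀ a b : ℝ, (a ≠ 0 ∨ b ≠ 0) → 0 < mink 3 (a•u+b•v) (a•u+b•v) := by
    intro a b hab
    have hq : mink 3 (a•u+b•v) P = 0 := by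
      simp [mink_add_left, mink_smul_left, huP, hvP]
    obtain ⟨hge, heq⟩ := mink_perp_nonneg P (a•u+b•v) hPnull hP4 hq
    rcases lt_or_eq_of_le hge with h | h
    · exact h
    · exfalso
      set c := ((a•u+b•v) (Fin.last 4)) / P (Fin.last 4) with hc
      have hz : a•u+b•v = c • P := heq h.symm
      have hsum : ∑ i, (![(-c), a, b] i) • (![P,u,v] i) = 0 := by
        rw [Fin.sum_univ_three]
        simp only [Matrix.cons_val_zero, Matrix.cons_val_one, Matrix.head_cons,
          Matrix.cons_val_two, Matrix.tail_cons]
        rw [show (-c)•P + a•u + b•v = (a•u+b•v) - c•P by module, hz, sub_self]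
      have hg := hli _ hsum
      rcases hab with h' | h'
      · exact h' (by simpa using hg 1)
      · exact h' (by simpa using hg 2)
  have expand : ∀ a b : ℝ, mink 3 (a•u+b•v) (a•u+b•v)
      = a^2 * mink 3 u u + 2*a*b*(mink 3 u v) + b^2 * mink 3 v v := by
    intro a b
    simp only [mink_add_left, mink_add_right, mink_smul_left, mink_smul_right]
    rw [mink_comm 3 v u]; ring
  have hu : 0 < mink 3 u u := by
    have := key 1 0 (Or.inl one_ne_zero)
    rw [expand] at this; linarith
  have hq := key (mink 3 u v) (-(mink 3 u u)) (Or.inr (neg_ne_zero.mpr (ne_of_gt hu)))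
  rw [expand] at hq
  nlinarith

end LawsonHelpers

/-- Lawson correspondence via T-transforms: a T-transform of a constant mean
curvature surface in `E(w)` is a constant mean curvature surface in the
space-form `E(Φ_s(p(s)))`, with unit normal `Φ_s(N + sF)`, mean curvature
`H_s = −(Φ_s(HF+N), Φ_s(p(s)))`, and `H_s² + K_s = H² + K`. -/
theorem lawson_correspondence
    (S : IsothermicSurface 3) (hfull : Full 3 S) (w : MV 3) (hw : w ≠ 0)
    (hlift : ∀ x, mink 3 (S.F x) w = -1)
    (N : Surf → MV 3) (hNsm : ContDiff ℝ (⊤ : ℕ∞) N) (hN : IsUnitNormal 3 S.F N w)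
    (H : ℝ) (hH : ∀ x, meanCurv 3 S.F N x = H)
    (hη₁ : ∀ x z, wedge 3 (S.F x) (S.W₁ x) z
        = wedge 3 (S.F x) (fderiv ℝ (fun y => H • S.F y + N y) x du) z)
    (hη₂ : ∀ x z, wedge 3 (S.F x) (S.W₂ x) z
        = wedge 3 (S.F x) (fderiv ℝ (fun y => H • S.F y + N y) x dv) z)
    (hpcq : ∀ t : ℝ, ParallelSection 3 S t
        (fun x => w + t • (H • S.F x + N x)))
    (s : ℝ) (Φ : Surf → MV 3 → MV 3) (Ss : IsothermicSurface 3)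
    (hT : IsTTransform 3 S s Φ Ss) :
    ∃ ws : MV 3, (∀ x, Φ x (w + s • (H • S.F x + N x)) = ws)
      ∧ (∀ x, mink 3 (Ss.F x) ws = -1)
      ∧ IsUnitNormal 3 Ss.F (fun x => Φ x (N x + s • S.F x)) ws
      ∧ ∃ Hs : ℝ,
          (∀ x, Hs = -mink 3 (Φ x (H • S.F x + N x)) ws)
          ∧ (∀ x, meanCurv 3 Ss.F (fun x => Φ x (N x + s • S.F x)) x = Hs)
          ∧ Hs ^ 2 + (-mink 3 ws ws) = H ^ 2 + (-mink 3 w w) := by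
  obtain ⟨⟨hlin, hminkΦ, hder⟩, hFs, hW1, hW2⟩ := hT
  obtain ⟨hN1, hN2, hN3, hN4, hN5⟩ := hN
  have hFsm := S.smooth_F
  have hFd : Differentiable ℝ S.F := hFsm.differentiable (by simp)
  have hNd : Differentiable ℝ N := hNsm.differentiable (by simp)
  -- smoothness of the first derivatives of F
  have hFu_sm : ContDiff ℝ (⊤ : ℕ∞) (fun y => fderiv ℝ S.F y du) := by
    have h1 : ContDiff ℝ (⊤ : ℕ∞) (fderiv ℝ S.F) := hFsm.fderiv_right (by simp)
    exact (ContinuousLinearMap.apply ℝ (MV 3) du).contDiff.comp h1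
  have hFv_sm : ContDiff ℝ (⊤ : ℕ∞) (fun y => fderiv ℝ S.F y dv) := by
    have h1 : ContDiff ℝ (⊤ : ℕ∞) (fderiv ℝ S.F) := hFsm.fderiv_right (by simp)
    exact (ContinuousLinearMap.apply ℝ (MV 3) dv).contDiff.comp h1
  have hFud : Differentiable ℝ (fun y => fderiv ℝ S.F y du) := hFu_sm.differentiable (by simp)
  have hFvd : Differentiable ℝ (fun y => fderiv ℝ S.F y dv) := hFv_sm.differentiable (by simp)
  -- the conserved quantity section
  have hqsm : ContDiff ℝ (⊤ : ℕ∞) (fun y => w + s • (H • S.F y + N y)) :=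
    contDiff_const.add (((hFsm.const_smul H).add hNsm).const_smul s)
  have hqd : Differentiable ℝ (fun y => w + s • (H • S.F y + N y)) :=
    hqsm.differentiable (by simp)
  -- basic orthogonality facts
  have hperp_deriv : ∀ (f g : Surf → MV 3), Differentiable ℝ f → Differentiable ℝ g →
      (∀ y, mink 3 (f y) (g y) = 0) → ∀ x e,
      mink 3 (fderiv ℝ f x e) (g x) + mink 3 (f x) (fderiv ℝ g x e) = 0 := by
    intro f g hf hg h x e
    have h0 : (fun y => mink 3 (f y) (g y)) = fun _ => (0:ℝ) := funext h
    have h1 := fderiv_mink (hf x) (hg x) e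
    rw [h0] at h1
    simp only [fderiv_fun_const, Pi.zero_apply, ContinuousLinearMap.zero_apply] at h1
    linarith
  have hFF' : ∀ x e, mink 3 (fderiv ℝ S.F x e) (S.F x) = 0 := by
    intro x e
    have h1 := hperp_deriv S.F S.F hFd hFd S.F_null x e
    have h2 := mink_comm 3 (S.F x) (fderiv ℝ S.F x e)
    linarith
  have hFF'' : ∀ x e, mink 3 (S.F x) (fderiv ℝ S.F x e) = 0 := by
    intro x e
    rw [mink_comm]; exact hFF' x e
  have hFuuF : ∀ x e, mink 3 (fderiv ℝ (fun y => fderiv ℝ S.F y du) x e) (S.F x)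
      = - mink 3 (fderiv ℝ S.F x du) (fderiv ℝ S.F x e) := by
    intro x e
    have h1 := hperp_deriv (fun y => fderiv ℝ S.F y du) S.F hFud hFd
      (fun y => hFF' y du) x e
    linarith
  have hFvvF : ∀ x e, mink 3 (fderiv ℝ (fun y => fderiv ℝ S.F y dv) x e) (S.F x)
      = - mink 3 (fderiv ℝ S.F x dv) (fderiv ℝ S.F x e) := by
    intro x e
    have h1 := hperp_deriv (fun y => fderiv ℝ S.F y dv) S.F hFvd hFd
      (fun y => hFF' y dv) x e
    linarith
  have hWF1 : ∀ x, mink 3 (S.W₁ x) (S.F x) = 0 := by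
    intro x; rw [mink_comm]; exact S.W₁_perp x
  have hWF2 : ∀ x, mink 3 (S.W₂ x) (S.F x) = 0 := by
    intro x; rw [mink_comm]; exact S.W₂_perp x
  have wedgeF1 : ∀ x, wedge 3 (S.F x) (S.W₁ x) (S.F x) = 0 := by
    intro x
    rw [wedge_apply_perp 3 _ _ _ (S.F_null x), hWF1 x]
    simp
  have wedgeF2 : ∀ x, wedge 3 (S.F x) (S.W₂ x) (S.F x) = 0 := by
    intro x
    rw [wedge_apply_perp 3 _ _ _ (S.F_null x), hWF2 x]
    simp
  -- Step 1 : constancy of Φ x (p(s) x)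
  have hpar := hpcq s
  have hkey : ∀ x : Surf, DifferentiableAt ℝ (fun y => Φ y (w + s • (H • S.F y + N y))) x
      ∧ fderiv ℝ (fun y => Φ y (w + s • (H • S.F y + N y))) x = 0 := by
    intro x
    obtain ⟨z, hzP, hzz⟩ := exists_perp_nonnull (S.F x)
    -- auxiliary linear section
    have hc1sm : ContDiff ℝ (⊤ : ℕ∞) (fun y : Surf => (y.1 - x.1 + 1) • z) :=
      ((contDiff_fst.sub contDiff_const).add contDiff_const).smul contDiff_const
    have hc1H : HasFDerivAt (fun y : Surf => (y.1 - x.1 + 1) • z)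
        ((ContinuousLinearMap.fst ℝ ℝ ℝ).smulRight z) x :=
      (((hasFDerivAt_fst (p := x)).sub_const x.1).add_const 1).smul_const z
    have hc1d : DifferentiableAt ℝ (fun y : Surf => (y.1 - x.1 + 1) • z) x :=
      hc1H.differentiableAt
    have hc1du : fderiv ℝ (fun y : Surf => (y.1 - x.1 + 1) • z) x du = z := by
      rw [hc1H.fderiv]; simp [du]
    have hc1dv : fderiv ℝ (fun y : Surf => (y.1 - x.1 + 1) • z) x dv = 0 := by
      rw [hc1H.fderiv]; simp [dv]
    have hc1x : (x.1 - x.1 + 1) • z = z := by simp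
    -- the crucial nonzero vector
    have hzP' : mink 3 (S.F x) z = 0 := by rw [mink_comm]; exact hzP
    have hwz : wedge 3 (S.F x) (S.W₁ x) z = -(mink 3 (S.W₁ x) z) • (S.F x) :=
      wedge_apply_perp 3 _ _ _ hzP'
    have hAA : mink 3 (z + s • wedge 3 (S.F x) (S.W₁ x) z)
        (z + s • wedge 3 (S.F x) (S.W₁ x) z) = mink 3 z z := by
      rw [hwz]
      simp only [mink_add_left, mink_add_right, mink_smul_left, mink_smul_right]
      simp [S.F_null x, hzP, hzP']
    have hPhiA : Φ x (z + s • wedge 3 (S.F x) (S.W₁ x) z) ≠ 0 := by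
      intro h0
      have := hminkΦ x (z + s • wedge 3 (S.F x) (S.W₁ x) z) (z + s • wedge 3 (S.F x) (S.W₁ x) z)
      rw [h0, hAA, mink_zero_left] at this
      exact hzz this.symm
    -- derivative identities for the two auxiliary maps
    have hg2 := hder (fun y : Surf => (y.1 - x.1 + 1) • z) hc1sm x
    have hg2du : fderiv ℝ (fun y => Φ y ((y.1 - x.1 + 1) • z)) x du
        = Φ x (z + s • wedge 3 (S.F x) (S.W₁ x) z) := by
      rw [hg2.1, hc1du, hc1x]
    have hg2dv : fderiv ℝ (fun y => Φ y ((y.1 - x.1 + 1) • z)) x dv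
        = Φ x (s • wedge 3 (S.F x) (S.W₂ x) z) := by
      rw [hg2.2, hc1dv, hc1x, zero_add]
    have hg2diff : DifferentiableAt ℝ (fun y => Φ y ((y.1 - x.1 + 1) • z)) x := by
      by_contra hcon
      rw [fderiv_zero_of_not_differentiableAt hcon] at hg2du
      exact hPhiA (by simpa using hg2du.symm)
    -- the combined section
    have hsum_sm : ContDiff ℝ (⊤ : ℕ∞) (fun y : Surf => (w + s • (H • S.F y + N y)) + (y.1 - x.1 + 1) • z) :=
      hqsm.add hc1sm
    have hg1 := hder _ hsum_sm x
    have hsum_du : fderiv ℝ (fun y : Surf => (w + s • (H • S.F y + N y)) + (y.1 - x.1 + 1) • z) x du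
        = fderiv ℝ (fun y => w + s • (H • S.F y + N y)) x du + z := by
      rw [fderiv_fun_add (hqd x) hc1d]; rw [ContinuousLinearMap.add_apply, hc1du]
    have hsum_dv : fderiv ℝ (fun y : Surf => (w + s • (H • S.F y + N y)) + (y.1 - x.1 + 1) • z) x dv
        = fderiv ℝ (fun y => w + s • (H • S.F y + N y)) x dv := by
      rw [fderiv_fun_add (hqd x) hc1d]; rw [ContinuousLinearMap.add_apply, hc1dv, add_zero]
    have hg1du : fderiv ℝ (fun y => Φ y ((w + s • (H • S.F y + N y)) + (y.1 - x.1 + 1) • z)) x du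
        = Φ x (z + s • wedge 3 (S.F x) (S.W₁ x) z) := by
      rw [hg1.1, hsum_du, hc1x]
      congr 1
      rw [wedge_add_right, smul_add]
      have hp := (hpar x).1
      simp only [] at hp
      rw [show fderiv ℝ (fun y => w + s • (H • S.F y + N y)) x du + z
          + (s • wedge 3 (S.F x) (S.W₁ x) (w + s • (H • S.F x + N x))
            + s • wedge 3 (S.F x) (S.W₁ x) z)
        = (fderiv ℝ (fun y => w + s • (H • S.F y + N y)) x du
            + s • wedge 3 (S.F x) (S.W₁ x) (w + s • (H • S.F x + N x)))
          + (z + s • wedge 3 (S.F x) (S.W₁ x) z) by abel, hp, zero_add]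
    have hg1dv : fderiv ℝ (fun y => Φ y ((w + s • (H • S.F y + N y)) + (y.1 - x.1 + 1) • z)) x dv
        = Φ x (s • wedge 3 (S.F x) (S.W₂ x) z) := by
      rw [hg1.2, hsum_dv, hc1x]
      congr 1
      rw [wedge_add_right, smul_add]
      have hp := (hpar x).2
      simp only [] at hp
      rw [show fderiv ℝ (fun y => w + s • (H • S.F y + N y)) x dv
          + (s • wedge 3 (S.F x) (S.W₂ x) (w + s • (H • S.F x + N x))
            + s • wedge 3 (S.F x) (S.W₂ x) z)
        = (fderiv ℝ (fun y => w + s • (H • S.F y + N y)) x dv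
            + s • wedge 3 (S.F x) (S.W₂ x) (w + s • (H • S.F x + N x)))
          + (s • wedge 3 (S.F x) (S.W₂ x) z) by abel, hp, zero_add]
    have hg1diff : DifferentiableAt ℝ
        (fun y => Φ y ((w + s • (H • S.F y + N y)) + (y.1 - x.1 + 1) • z)) x := by
      by_contra hcon
      rw [fderiv_zero_of_not_differentiableAt hcon] at hg1du
      exact hPhiA (by simpa using hg1du.symm)
    -- assemble
    have hsplit : (fun y => Φ y (w + s • (H • S.F y + N y)))
        = fun y => Φ y ((w + s • (H • S.F y + N y)) + (y.1 - x.1 + 1) • z)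
            - Φ y ((y.1 - x.1 + 1) • z) := by
      funext y
      rw [(hlin y).map_add (w + s • (H • S.F y + N y)) ((y.1 - x.1 + 1) • z)]
      abel
    rw [hsplit]
    refine ⟨hg1diff.sub hg2diff, ?_⟩
    rw [fderiv_fun_sub hg1diff hg2diff]
    apply clm_eq_zero_of_du_dv
    · rw [ContinuousLinearMap.sub_apply, hg1du, hg2du, sub_self]
    · rw [ContinuousLinearMap.sub_apply, hg1dv, hg2dv, sub_self]
  have hconst : ∀ x y : Surf,
      Φ x (w + s • (H • S.F x + N x)) = Φ y (w + s • (H • S.F y + N y)) := by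
    intro x y
    exact is_const_of_fderiv_eq_zero (fun x => (hkey x).1) (fun x => (hkey x).2) x y
  -- more pointwise identities
  have hwF : ∀ x, mink 3 w (S.F x) = -1 := by
    intro x; rw [mink_comm]; exact hlift x
  have hwN : ∀ x, mink 3 w (N x) = 0 := by
    intro x; rw [mink_comm]; exact hN2 x
  have hFN : ∀ x, mink 3 (S.F x) (N x) = 0 := by
    intro x; rw [mink_comm]; exact hN3 x
  have hN4' : ∀ x, mink 3 (N x) (fderiv ℝ S.F x du) = 0 := fun x => hN4 x
  have hN5' : ∀ x, mink 3 (N x) (fderiv ℝ S.F x dv) = 0 := fun x => hN5 x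
  -- derivatives of the transformed surface
  have hSsF : Ss.F = fun y => Φ y (S.F y) := funext hFs
  have hdu1 : ∀ x, fderiv ℝ Ss.F x du = Φ x (fderiv ℝ S.F x du) := by
    intro x
    rw [hSsF, (hder S.F hFsm x).1, wedgeF1 x, smul_zero, add_zero]
  have hdv1 : ∀ x, fderiv ℝ Ss.F x dv = Φ x (fderiv ℝ S.F x dv) := by
    intro x
    rw [hSsF, (hder S.F hFsm x).2, wedgeF2 x, smul_zero, add_zero]
  have hduu : ∀ x, fderiv ℝ (fun y => Φ y (fderiv ℝ S.F y du)) x du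
      = Φ x (fderiv ℝ (fun y => fderiv ℝ S.F y du) x du
          + s • wedge 3 (S.F x) (S.W₁ x) (fderiv ℝ S.F x du)) :=
    fun x => (hder _ hFu_sm x).1
  have hduv : ∀ x, fderiv ℝ (fun y => Φ y (fderiv ℝ S.F y dv)) x du
      = Φ x (fderiv ℝ (fun y => fderiv ℝ S.F y dv) x du
          + s • wedge 3 (S.F x) (S.W₁ x) (fderiv ℝ S.F x dv)) :=
    fun x => (hder _ hFv_sm x).1
  have hdvv : ∀ x, fderiv ℝ (fun y => Φ y (fderiv ℝ S.F y dv)) x dv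
      = Φ x (fderiv ℝ (fun y => fderiv ℝ S.F y dv) x dv
          + s • wedge 3 (S.F x) (S.W₂ x) (fderiv ℝ S.F x dv)) :=
    fun x => (hder _ hFv_sm x).2
  -- wedge terms are invisible to the normal
  have hwm : ∀ (x : Surf) (W z : MV 3), mink 3 (S.F x) z = 0 →
      mink 3 (wedge 3 (S.F x) W z) (N x + s • S.F x) = 0 := by
    intro x W z hz
    rw [wedge_apply_perp 3 _ _ _ hz, mink_smul_left, mink_add_right, mink_smul_right,
      S.F_null x, mink_comm 3 (S.F x) (N x), hN3 x]
    ring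
  have hIIuu : ∀ x, mink 3 (fderiv ℝ (fun y => fderiv ℝ S.F y du) x du
        + s • wedge 3 (S.F x) (S.W₁ x) (fderiv ℝ S.F x du)) (N x + s • S.F x)
      = mink 3 (fderiv ℝ (fun y => fderiv ℝ S.F y du) x du) (N x)
        - s * mink 3 (fderiv ℝ S.F x du) (fderiv ℝ S.F x du) := by
    intro x
    rw [mink_add_left, mink_smul_left, hwm x _ _ (hFF'' x du), mul_zero, add_zero,
      mink_add_right, mink_smul_right, hFuuF x du]
    ring
  have hIIuv : ∀ x, mink 3 (fderiv ℝ (fun y => fderiv ℝ S.F y dv) x du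
        + s • wedge 3 (S.F x) (S.W₁ x) (fderiv ℝ S.F x dv)) (N x + s • S.F x)
      = mink 3 (fderiv ℝ (fun y => fderiv ℝ S.F y dv) x du) (N x)
        - s * mink 3 (fderiv ℝ S.F x du) (fderiv ℝ S.F x dv) := by
    intro x
    rw [mink_add_left, mink_smul_left, hwm x _ _ (hFF'' x dv), mul_zero, add_zero,
      mink_add_right, mink_smul_right, hFvvF x du,
      mink_comm 3 (fderiv ℝ S.F x dv) (fderiv ℝ S.F x du)]
    ring
  have hIIvv : ∀ x, mink 3 (fderiv ℝ (fun y => fderiv ℝ S.F y dv) x dv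
        + s • wedge 3 (S.F x) (S.W₂ x) (fderiv ℝ S.F x dv)) (N x + s • S.F x)
      = mink 3 (fderiv ℝ (fun y => fderiv ℝ S.F y dv) x dv) (N x)
        - s * mink 3 (fderiv ℝ S.F x dv) (fderiv ℝ S.F x dv) := by
    intro x
    rw [mink_add_left, mink_smul_left, hwm x _ _ (hFF'' x dv), mul_zero, add_zero,
      mink_add_right, mink_smul_right, hFvvF x dv]
    ring
  have hpd : ∀ (e : Surf) (f : Surf → MV 3), pd e f = fun x => fderiv ℝ f x e :=
    fun _ _ => rfl
  -- abbreviation for the constant vector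
  set x₀ : Surf := ((0:ℝ), (0:ℝ)) with hx₀
  refine ⟨Φ x₀ (w + s • (H • S.F x₀ + N x₀)), fun x => hconst x x₀, ?_, ?_, H - s, ?_, ?_, ?_⟩
  · -- (Ss.F, ws) = -1
    intro x
    rw [hFs x, ← hconst x x₀, hminkΦ]
    simp only [mink_add_right, mink_smul_right]
    rw [hlift x, S.F_null x, hFN x]
    ring
  · -- unit normal
    refine ⟨fun x => ?_, fun x => ?_, fun x => ?_, fun x => ?_, fun x => ?_⟩
    · rw [hminkΦ]
      simp only [mink_add_left, mink_add_right, mink_smul_left, mink_smul_right]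
      rw [hN1 x, hN3 x, hFN x, S.F_null x]
      ring
    · rw [← hconst x x₀, hminkΦ]
      simp only [mink_add_left, mink_add_right, mink_smul_left, mink_smul_right]
      rw [hN2 x, hN3 x, hN1 x, hFN x, S.F_null x, hlift x]
      ring
    · rw [hFs x, hminkΦ]
      simp only [mink_add_left, mink_smul_left]
      rw [hN3 x, S.F_null x]
      ring
    · simp only [hpd]
      rw [hdu1 x, hminkΦ]
      simp only [mink_add_left, mink_smul_left]
      rw [hN4' x, hFF'' x du]
      ring
    · simp only [hpd]
      rw [hdv1 x, hminkΦ]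
      simp only [mink_add_left, mink_smul_left]
      rw [hN5' x, hFF'' x dv]
      ring
  · -- value of Hs
    intro x
    rw [← hconst x x₀, hminkΦ]
    simp only [mink_add_left, mink_add_right, mink_smul_left, mink_smul_right]
    rw [hlift x, hN2 x, hN3 x, hN1 x, hFN x, S.F_null x]
    ring
  · -- mean curvature of the transformed surface
    intro x
    have hHx := hH x
    simp only [meanCurv, gUU, gUV, gVV, hpd] at hHx
    have hDpos := gram_det_pos (S.F x) (fderiv ℝ S.F x du) (fderiv ℝ S.F x dv)
      (S.F_ne x) (S.F_null x) (hFF' x du) (hFF' x dv) (S.immersed x)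
    simp only [meanCurv, gUU, gUV, gVV, hpd]
    simp only [hdu1, hdv1, hduu, hduv, hdvv, hminkΦ]
    simp only [hIIuu, hIIuv, hIIvv]
    have hD2 : (2*(mink 3 (fderiv ℝ S.F x du) (fderiv ℝ S.F x du)
        * mink 3 (fderiv ℝ S.F x dv) (fderiv ℝ S.F x dv)
        - mink 3 (fderiv ℝ S.F x du) (fderiv ℝ S.F x dv)^2)) ≠ 0 :=
      ne_of_gt (by linarith)
    rw [div_eq_iff hD2] at hHx ⊢
    linear_combination hHx
  · -- Lawson identity
    rw [hminkΦ]
    simp only [mink_add_left, mink_add_right, mink_smul_left, mink_smul_right]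
    rw [hlift x₀, hwF x₀, hwN x₀, hN2 x₀, hN3 x₀, hN1 x₀, hFN x₀, S.F_null x₀]
    ring
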